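/- Fix d ≥ 1, R > 0, 0 < δ ≤ R, and unit vectors u_1, …, u_N ∈ ℝ^d. Let b_1, …, b_N be independent random variables, each uniformly distributed on [−R, R], and let H_i = {y : ⟨u_i, y⟩ = b_i}. Then the expected Lebesgue measure of the catastrophic set {x : ‖x‖ ≤ R and dist(x, H_i) ≤ δ for some i} is at least ω_d R^d · (1 − exp(−Nδ/(2R))), where ω_d is the measure of the unit ball in ℝ^d. -/

import Mathlib

/-!
By Tonelli, the expected volume of the catastrophic set is the integral over `x` of the
probability that `x` is catastrophic, which we bound below on the ball `‖x‖ ≤ R`. There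
`dist(x, H_i) = |⟪u_i, x⟫ - b_i|` with `c_i = ⟪u_i, x⟫ ∈ [-R, R]`, and as `δ ≤ 2R` the window
`[c_i - δ, c_i + δ]` keeps length at least `δ` inside `[-R, R]`; so `x` escapes hyperplane `i`
with probability at most `1 - δ/(2R) ≤ exp(-δ/(2R))`, and by independence it escapes all of
them with probability at most `exp(-Nδ/(2R))`.
-/

open scoped RealInnerProductSpace
open MeasureTheory ProbabilityTheory Set Metric

theorem infDist_setOf_inner_eq {E : Type*} [NormedAddCommGroup E] [InnerProductSpace ℝ E]
    {u : E} (hu : ‖u‖ = 1) (c : ℝ) (x : E) :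
    infDist x {y | ⟪u, y⟫ = c} = |⟪u, x⟫ - c| := by
  have hproj : x - (⟪u, x⟫ - c) • u ∈ {y | ⟪u, y⟫ = c} := by
    simp [inner_sub_right, real_inner_smul_right, hu]
  refine le_antisymm ?_ ?_
  · simpa [dist_eq_norm, norm_smul, hu] using infDist_le_dist_of_mem (x := x) hproj
  · refine (le_infDist ⟨_, hproj⟩).2 fun y (hy : ⟪u, y⟫ = c) => ?_
    calc |⟪u, x⟫ - c| = |⟪u, x - y⟫| := by rw [inner_sub_right, hy]
      _ ≤ ‖u‖ * ‖x - y‖ := abs_real_inner_le_norm u (x - y)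
      _ = dist x y := by rw [hu, one_mul, dist_eq_norm]

theorem smul_restrict_Icc_eq_cond (R : ℝ) :
    (ENNReal.ofReal (2 * R))⁻¹ • volume.restrict (Icc (-R) R) = volume[|Icc (-R) R] := by
  rw [ProbabilityTheory.cond, Real.volume_Icc, sub_neg_eq_add, two_mul]

theorem isProbabilityMeasure_cond_Icc {R : ℝ} (hR : 0 < R) :
    IsProbabilityMeasure (volume[|Icc (-R) R]) :=
  cond_isProbabilityMeasure_of_finite (by simp [hR]) (by simp)

theorem ofReal_div_le_cond_Icc_closedBall {R c δ : ℝ} (hR : 0 < R) (hc : |c| ≤ R)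
    (hδ : 0 ≤ δ) (hδR : δ ≤ 2 * R) :
    ENNReal.ofReal (δ / (2 * R)) ≤ volume[|Icc (-R) R] (closedBall c δ) := by
  obtain ⟨hcl, hcu⟩ := abs_le.mp hc
  set a := max (c - δ) (-R)
  have ha_le : a ≤ c := max_le (by linarith) hcl
  have ha_add_le : a + δ ≤ R := by
    rw [← max_add_add_right]
    exact max_le (by linarith) (by linarith)
  have hsub : Icc a (a + δ) ⊆ Icc (-R) R ∩ closedBall c δ := by
    rw [Real.closedBall_eq_Icc]
    exact subset_inter (Icc_subset_Icc (le_max_right _ _) ha_add_le)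
      (Icc_subset_Icc (le_max_left _ _) (by linarith))
  calc ENNReal.ofReal (δ / (2 * R))
      = (ENNReal.ofReal (2 * R))⁻¹ * volume (Icc a (a + δ)) := by
        rw [Real.volume_Icc, add_sub_cancel_left, ENNReal.ofReal_div_of_pos (by positivity),
          ENNReal.div_eq_inv_mul]
    _ ≤ volume[|Icc (-R) R] (closedBall c δ) := by
        rw [← smul_restrict_Icc_eq_cond, Measure.smul_apply, smul_eq_mul,
          Measure.restrict_apply measurableSet_closedBall, inter_comm]
        gcongr

theorem MeasureTheory.Measure.pi_setOf_exists_mem {ι : Type*} [Fintype ι] {α : ι → Type*}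
    [∀ i, MeasurableSpace (α i)] (μ : ∀ i, Measure (α i)) [∀ i, IsProbabilityMeasure (μ i)]
    {s : ∀ i, Set (α i)} (hs : ∀ i, MeasurableSet (s i)) :
    Measure.pi μ {b | ∃ i, b i ∈ s i} = 1 - ∏ i, μ i (s i)ᶜ := by
  have hcompl : {b : ∀ i, α i | ∃ i, b i ∈ s i} = (univ.pi fun i => (s i)ᶜ)ᶜ := by
    ext b; simp
  rw [hcompl, prob_compl_eq_one_sub (MeasurableSet.univ_pi fun i => (hs i).compl),
    Measure.pi_pi]

theorem ofReal_one_sub_exp_le_pi_cond_Icc {ι : Type*} [Fintype ι] {R δ : ℝ} (hR : 0 < R)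
    (hδ : 0 ≤ δ) (hδR : δ ≤ 2 * R) {c : ι → ℝ} (hc : ∀ i, |c i| ≤ R) :
    ENNReal.ofReal (1 - Real.exp (-(Fintype.card ι * δ / (2 * R)))) ≤
      Measure.pi (fun _ : ι => volume[|Icc (-R) R]) {b | ∃ i, b i ∈ closedBall (c i) δ} := by
  have := isProbabilityMeasure_cond_Icc hR
  have hmiss : ∀ i, volume[|Icc (-R) R] (closedBall (c i) δ)ᶜ ≤
      ENNReal.ofReal (Real.exp (-(δ / (2 * R)))) := fun i => calc
    _ = 1 - volume[|Icc (-R) R] (closedBall (c i) δ) :=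
        prob_compl_eq_one_sub measurableSet_closedBall
    _ ≤ 1 - ENNReal.ofReal (δ / (2 * R)) := by
        gcongr
        exact ofReal_div_le_cond_Icc_closedBall hR (hc i) hδ hδR
    _ = ENNReal.ofReal (1 - δ / (2 * R)) := by
        rw [ENNReal.ofReal_sub 1 (by positivity), ENNReal.ofReal_one]
    _ ≤ _ := ENNReal.ofReal_le_ofReal (by linarith [Real.add_one_le_exp (-(δ / (2 * R)))])
  rw [Measure.pi_setOf_exists_mem _ fun i => measurableSet_closedBall]
  calc ENNReal.ofReal (1 - Real.exp (-(Fintype.card ι * δ / (2 * R))))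
      = 1 - ∏ _i : ι, ENNReal.ofReal (Real.exp (-(δ / (2 * R)))) := by
        rw [ENNReal.ofReal_sub _ (Real.exp_nonneg _), ENNReal.ofReal_one, Finset.prod_const,
          Finset.card_univ, ← ENNReal.ofReal_pow (Real.exp_nonneg _), ← Real.exp_nat_mul,
          mul_neg, mul_div_assoc]
    _ ≤ _ := by gcongr with i; exact hmiss i

theorem expected_catastrophic_volume_lower_bound_general
    (d N : ℕ)
    (R δ : ℝ) (hR : 0 < R) (hδ : 0 < δ) (hδR : δ ≤ R)
    (u : Fin N → EuclideanSpace ℝ (Fin d)) (hu : ∀ i, ‖u i‖ = 1) :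
    volume (Metric.ball (0 : EuclideanSpace ℝ (Fin d)) 1) * ENNReal.ofReal (R ^ d) *
        ENNReal.ofReal (1 - Real.exp (-(N * δ / (2 * R)))) ≤
      ∫⁻ b in Set.univ,
        volume {x : EuclideanSpace ℝ (Fin d) | ‖x‖ ≤ R ∧ ∃ i,
          Metric.infDist x {y : EuclideanSpace ℝ (Fin d) | ⟪u i, y⟫ = b i} ≤ δ}
        ∂(Measure.pi (fun _ : Fin N =>
            (ENNReal.ofReal (2 * R))⁻¹ • volume.restrict (Set.Icc (-R) R))) := by
  set μ := Measure.pi fun _ : Fin N => volume[|Icc (-R) R]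
  have := isProbabilityMeasure_cond_Icc hR
  set S : Set ((Fin N → ℝ) × EuclideanSpace ℝ (Fin d)) :=
    {p | ‖p.2‖ ≤ R ∧ ∃ i, p.1 i ∈ closedBall ⟪u i, p.2⟫ δ}
  have hS : MeasurableSet S := by
    simp only [S, mem_closedBall, ofPred_and, ofPred_exists]
    exact (measurableSet_le (by fun_prop) measurable_const).inter <|
      .iUnion fun i => measurableSet_le (by fun_prop) measurable_const
  have hslice : ∀ b, {x : EuclideanSpace ℝ (Fin d) | ‖x‖ ≤ R ∧ ∃ i,
      infDist x {y | ⟪u i, y⟫ = b i} ≤ δ} = Prod.mk b ⁻¹' S := by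
    intro b
    simp [S, infDist_setOf_inner_eq (hu _), Real.dist_eq, abs_sub_comm]
  have hcover : ∀ x ∈ closedBall (0 : EuclideanSpace ℝ (Fin d)) R,
      ENNReal.ofReal (1 - Real.exp (-(N * δ / (2 * R)))) ≤ μ ((·, x) ⁻¹' S) := by
    intro x hx
    rw [mem_closedBall_zero_iff] at hx
    have hc : ∀ i, |⟪u i, x⟫| ≤ R := fun i =>
      (abs_real_inner_le_norm _ _).trans (by rw [hu, one_mul]; exact hx)
    simpa [S, hx, Fintype.card_fin] using
      ofReal_one_sub_exp_le_pi_cond_Icc hR hδ.le (by linarith) hc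
  rw [smul_restrict_Icc_eq_cond, setLIntegral_univ]
  calc _ = ∫⁻ _x in closedBall (0 : EuclideanSpace ℝ (Fin d)) R,
        ENNReal.ofReal (1 - Real.exp (-(N * δ / (2 * R)))) := by
        rw [setLIntegral_const, Measure.addHaar_closedBall _ _ hR.le, finrank_euclideanSpace_fin]
        ring
    _ ≤ ∫⁻ x in closedBall 0 R, μ ((·, x) ⁻¹' S) :=
        setLIntegral_mono' measurableSet_closedBall hcover
    _ ≤ ∫⁻ x, μ ((·, x) ⁻¹' S) := setLIntegral_le_lintegral _ _
    _ = ∫⁻ b, volume (Prod.mk b ⁻¹' S) ∂μ := by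
        rw [← Measure.prod_apply_symm hS, Measure.prod_apply hS]
    _ = _ := lintegral_congr fun b => by rw [hslice]

/-- If the biases `b i` are independent and uniform on `[-R, R]`, the expected
volume of the catastrophic set (points of the ball of radius `R` within distance
`δ` of some random hyperplane) is at least `ω_d R^d (1 − exp(−Nδ/(2R)))`. -/
theorem expected_catastrophic_volume_lower_bound
    (d N : ℕ) (hd : 1 ≤ d)
    (R δ : ℝ) (hR : 0 < R) (hδ : 0 < δ) (hδR : δ ≤ R)
    (u : Fin N → EuclideanSpace ℝ (Fin d)) (hu : ∀ i, ‖u i‖ = 1) :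
    volume (Metric.ball (0 : EuclideanSpace ℝ (Fin d)) 1) * ENNReal.ofReal (R ^ d) *
        ENNReal.ofReal (1 - Real.exp (-(N * δ / (2 * R)))) ≤
      ∫⁻ b in Set.univ,
        volume {x : EuclideanSpace ℝ (Fin d) | ‖x‖ ≤ R ∧ ∃ i,
          Metric.infDist x {y : EuclideanSpace ℝ (Fin d) | ⟪u i, y⟫ = b i} ≤ δ}
        ∂(Measure.pi (fun _ : Fin N =>
            (ENNReal.ofReal (2 * R))⁻¹ • volume.restrict (Set.Icc (-R) R))) :=
  expected_catastrophic_volume_lower_bound_general d N R δ hR hδ hδR u hu
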